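/- arXiv:1602.06195 — 5 statements merged into one kernel-verified Lean document; each statement's English description precedes it below -/
import Mathlib

section
/- Let ρ > 0, ṽ > 0, d > 0, c₂ > 0 and ṽ' ≥ 0. Then the discriminant Δ_x = (ṽ' − c₂·ṽ/ρ)²·cos²θ + 4·(ṽ'·ṽ/ρ)·d·sin²θ is nonnegative for every θ ∈ ℝ, and hence the matrix A_x = [[ṽ'·cos θ, −ṽ·sin θ], [−d·(ṽ'/ρ)·sin θ, c₂·(ṽ/ρ)·cos θ]] has two real eigenvalues. -/
open Matrix Real

theorem stmt_1 (ρ vt vt' c₂ d : ℝ) (hρ : 0 < ρ) (hv : 0 < vt) (hd : 0 < d)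
    (hc₂ : 0 < c₂) (hvt' : 0 ≤ vt') :
    ∀ θ : ℝ,
      0 ≤ (vt' - c₂ * vt / ρ) ^ 2 * Real.cos θ ^ 2
          + 4 * (vt' * vt / ρ) * d * Real.sin θ ^ 2 ∧
      ∃ lam₁ lam₂ : ℝ, ∀ lam : ℝ,
        (lam • (1 : Matrix (Fin 2) (Fin 2) ℝ) -
          !![vt' * Real.cos θ, -vt * Real.sin θ;
             -d * (vt' / ρ) * Real.sin θ, c₂ * (vt / ρ) * Real.cos θ]).det
          = (lam - lam₁) * (lam - lam₂) := by
  intro θ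
  have hΔ : 0 ≤ (vt' - c₂ * vt / ρ) ^ 2 * Real.cos θ ^ 2
      + 4 * (vt' * vt / ρ) * d * Real.sin θ ^ 2 := by positivity
  refine ⟨hΔ, ?_⟩
  have hs : Real.sqrt ((vt' - c₂ * vt / ρ) ^ 2 * Real.cos θ ^ 2
      + 4 * (vt' * vt / ρ) * d * Real.sin θ ^ 2) ^ 2
      = (vt' - c₂ * vt / ρ) ^ 2 * Real.cos θ ^ 2
        + 4 * (vt' * vt / ρ) * d * Real.sin θ ^ 2 := Real.sq_sqrt hΔ
  have hρ' : (ρ : ℝ) ≠ 0 := ne_of_gt hρ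
  refine ⟨(vt' * Real.cos θ + c₂ * (vt / ρ) * Real.cos θ
      + Real.sqrt ((vt' - c₂ * vt / ρ) ^ 2 * Real.cos θ ^ 2
        + 4 * (vt' * vt / ρ) * d * Real.sin θ ^ 2)) / 2,
    (vt' * Real.cos θ + c₂ * (vt / ρ) * Real.cos θ
      - Real.sqrt ((vt' - c₂ * vt / ρ) ^ 2 * Real.cos θ ^ 2
        + 4 * (vt' * vt / ρ) * d * Real.sin θ ^ 2)) / 2, fun lam => ?_⟩
  simp only [Matrix.det_fin_two, Matrix.sub_apply, Matrix.smul_apply,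
    Matrix.one_apply, Matrix.cons_val', Matrix.cons_val_zero, Matrix.cons_val_one,
    Matrix.head_cons, Matrix.head_fin_const, Matrix.empty_val',
    Matrix.cons_val_fin_one, smul_eq_mul]
  norm_num
  linear_combination (1/4 : ℝ) * hs
end

section
/- Let ρ > 0, ṽ > 0, γ > 0, d > 0, c₂ > 0, θ ∈ ℝ, ξ ∈ ℝ \ {0}, and ṽ' ≥ 0. Consider the complex 2×2 matrix A_ξ = [[ṽ'·cos θ, −ṽ·sin θ], [−d·(ṽ'/ρ)·sin θ, −iγξ + c₂·(ṽ/ρ)·cos θ]]. Then every eigenvalue λ of A_ξ satisfies ξ · Im(λ) ≤ 0. -/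
open Matrix Complex

theorem stmt_5 (ρ vt vt' γ d c₂ θ ξ : ℝ) (hρ : 0 < ρ) (hv : 0 < vt)
    (hγ : 0 < γ) (hd : 0 < d) (hc₂ : 0 < c₂) (hξ : ξ ≠ 0) (hvt' : 0 ≤ vt') :
    ∀ lam : ℂ,
      ((!![(vt' * Real.cos θ : ℂ), (-vt * Real.sin θ : ℂ);
           (-d * (vt' / ρ) * Real.sin θ : ℂ),
           -Complex.I * γ * ξ + (c₂ * (vt / ρ) * Real.cos θ : ℂ)] :
          Matrix (Fin 2) (Fin 2) ℂ)
        - lam • (1 : Matrix (Fin 2) (Fin 2) ℂ)).det = 0 →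
      ξ * lam.im ≤ 0 := by
  intro lam h
  rw [Matrix.det_fin_two] at h
  simp [Matrix.sub_apply, Matrix.smul_apply, Matrix.one_apply] at h
  set K : ℝ := vt * d * (vt' / ρ) * Real.sin θ ^ 2 with hKdef
  have hK : 0 ≤ K := by positivity
  have heq : (lam - ((vt' * Real.cos θ : ℝ) : ℂ)) *
      (lam - (-Complex.I * γ * ξ + ((c₂ * (vt / ρ) * Real.cos θ : ℝ) : ℂ))) = (K : ℂ) := by
    push_cast [hKdef]
    linear_combination h
  set u : ℂ := lam - ((vt' * Real.cos θ : ℝ) : ℂ) with hudef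
  have him : u.im = lam.im := by simp [hudef]
  by_cases hu : u = 0
  · have h0 : lam.im = 0 := by rw [← him, hu]; simp
    rw [h0]; simp
  · have hn : 0 < Complex.normSq u := Complex.normSq_pos.mpr hu
    have h2 : (lam - (-Complex.I * γ * ξ + ((c₂ * (vt / ρ) * Real.cos θ : ℝ) : ℂ))) *
        ((Complex.normSq u : ℝ) : ℂ) = (K : ℂ) * (starRingEnd ℂ) u := by
      rw [← Complex.mul_conj]
      linear_combination ((starRingEnd ℂ) u) * heq
    have h3 := congrArg Complex.im h2
    simp [Complex.mul_im, Complex.sub_im, Complex.add_im, Complex.mul_re, Complex.mul_im,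
      Complex.I_re, Complex.I_im, him] at h3
    -- h3 should be: (lam.im + γ*ξ) * normSq u = -(K * lam.im) or similar
    have h4 : (lam.im + γ * ξ) * Complex.normSq u * lam.im = -(K * lam.im) * lam.im := by
      rw [h3]
    nlinarith [h4, mul_nonneg (sq_nonneg lam.im) hn.le, mul_nonneg hK (sq_nonneg lam.im),
      mul_pos hγ hn, sq_nonneg lam.im]
end

section
/- Let ρ > 0, ṽ > 0, γ > 0, d > 0, c₂ > 0, ξ ∈ ℝ \ {0}, sin θ ≠ 0, and ṽ' < 0. Then the matrix A_ξ = [[ṽ'·cos θ, −ṽ·sin θ], [−d·(ṽ'/ρ)·sin θ, −iγξ + c₂·(ṽ/ρ)·cos θ]] possesses an eigenvalue λ with ξ · Im(λ) > 0. -/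
open Matrix Complex

private lemma sq_mk (A B : ℝ) : ((A:ℂ)+(B:ℂ)*Complex.I)^2
    = ((A^2-B^2 : ℝ):ℂ) + ((2*A*B : ℝ):ℂ)*Complex.I := by
  push_cast; ring_nf; rw [Complex.I_sq]; ring

private lemma aux_lt (c r : ℝ) (hr0 : 0 ≤ r) (h : c^2 < r^2) : c < r := by
  nlinarith [sq_nonneg (c - r), sq_nonneg (c + r)]

private lemma aux_le (c r : ℝ) (hr0 : 0 ≤ r) (h : c^2 ≤ r^2) : c ≤ r := by
  nlinarith [sq_nonneg (c - r), sq_nonneg (c + r)]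

theorem stmt_6 (ρ vt vt' γ d c₂ θ ξ : ℝ) (hρ : 0 < ρ) (hv : 0 < vt)
    (hγ : 0 < γ) (hd : 0 < d) (hc₂ : 0 < c₂) (hξ : ξ ≠ 0)
    (hθ : Real.sin θ ≠ 0) (hvt' : vt' < 0) :
    ∃ lam : ℂ,
      ((!![(vt' * Real.cos θ : ℂ), (-vt * Real.sin θ : ℂ);
           (-d * (vt' / ρ) * Real.sin θ : ℂ),
           -Complex.I * γ * ξ + (c₂ * (vt / ρ) * Real.cos θ : ℂ)] :
          Matrix (Fin 2) (Fin 2) ℂ)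
        - lam • (1 : Matrix (Fin 2) (Fin 2) ℂ)).det = 0 ∧
      0 < ξ * lam.im := by
  have hρ' : (ρ:ℝ) ≠ 0 := ne_of_gt hρ
  set cθ := Real.cos θ with hcθ
  set sθ := Real.sin θ with hsθ
  clear_value cθ sθ
  obtain ⟨p, hp⟩ : ∃ p : ℝ, p = (vt' + c₂*vt/ρ)*cθ := ⟨_, rfl⟩
  obtain ⟨q, hq⟩ : ∃ q : ℝ, q = (vt*vt'/ρ)*(c₂*cθ^2 - d*sθ^2) := ⟨_, rfl⟩
  obtain ⟨a, ha⟩ : ∃ a : ℝ, a = p^2 - γ^2*ξ^2 - 4*q := ⟨_, rfl⟩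
  obtain ⟨b, hb⟩ : ∃ b : ℝ, b = 2*γ*ξ*cθ*(vt' - c₂*vt/ρ) := ⟨_, rfl⟩
  have hsθ2 : 0 < sθ^2 := by positivity
  have hξ2 : 0 < ξ^2 := by positivity
  have hkey : 4*γ^2*ξ^2*a + 4*γ^4*ξ^4 < b^2 := by
    have h1 : b^2 - (4*γ^2*ξ^2*a + 4*γ^4*ξ^4)
        = 16*γ^2*ξ^2*d*sθ^2*(vt*(-vt')/ρ) := by
      rw [hb, ha, hp, hq]; field_simp; ring
    have h2 : 0 < 16*γ^2*ξ^2*d*sθ^2*(vt*(-vt')/ρ) := by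
      have hv' : 0 < -vt' := by linarith
      have : 0 < vt*(-vt')/ρ := div_pos (mul_pos hv hv') hρ
      positivity
    linarith only [h1, h2]
  obtain ⟨r, hr⟩ : ∃ r : ℝ, r = Real.sqrt (a^2+b^2) := ⟨_, rfl⟩
  have hr0 : 0 ≤ r := hr ▸ Real.sqrt_nonneg _
  have hr2 : r^2 = a^2+b^2 := by rw [hr]; exact Real.sq_sqrt (by positivity)
  have hgr : a + 2*(γ^2*ξ^2) < r := by
    refine aux_lt _ _ hr0 ?_
    rw [hr2]; linarith only [hkey]
  have hra : -a ≤ r := by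
    refine aux_le _ _ hr0 ?_
    rw [hr2]; linarith only [sq_nonneg b, sq_nonneg a]
  have hγξ2 : 0 < γ^2*ξ^2 := by positivity
  obtain ⟨x, hx⟩ : ∃ x : ℝ, x = Real.sqrt ((r+a)/2) := ⟨_, rfl⟩
  obtain ⟨y, hy⟩ : ∃ y : ℝ, y = Real.sqrt ((r-a)/2) := ⟨_, rfl⟩
  have hx0 : 0 ≤ x := hx ▸ Real.sqrt_nonneg _
  have hy0 : 0 ≤ y := hy ▸ Real.sqrt_nonneg _
  have hx2 : x^2 = (r+a)/2 := by rw [hx]; exact Real.sq_sqrt (by linarith only [hra])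
  have hy2 : y^2 = (r-a)/2 := by
    rw [hy]; exact Real.sq_sqrt (by linarith only [hgr, hγξ2])
  have hylarge : γ^2*ξ^2 < y^2 := by rw [hy2]; linarith only [hgr]
  have h2xy : 2*(x*y) = |b| := by
    have hsq : (2*(x*y))^2 = b^2 := by
      have e : (2*(x*y))^2 = 4*x^2*y^2 := by ring
      rw [e, hx2, hy2]; linear_combination hr2
    have hnn : 0 ≤ 2*(x*y) := by positivity
    calc 2*(x*y) = Real.sqrt ((2*(x*y))^2) := (Real.sqrt_sq hnn).symm
      _ = Real.sqrt (b^2) := by rw [hsq]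
      _ = |b| := Real.sqrt_sq_eq_abs b
  obtain ⟨s, hs⟩ : ∃ s : ℝ, s = if 0 ≤ b then (1:ℝ) else -1 := ⟨_, rfl⟩
  have hs2 : s^2 = 1 := by rw [hs]; split_ifs <;> norm_num
  have hsb : s * |b| = b := by
    rw [hs]; split_ifs with h
    · rw [_root_.abs_of_nonneg h]; ring
    · rw [_root_.abs_of_neg (lt_of_not_ge h)]; ring
  obtain ⟨ε, hε⟩ : ∃ e : ℝ, e = if 0 < ξ then (1:ℝ) else -1 := ⟨_, rfl⟩
  have hε2 : ε^2 = 1 := by rw [hε]; split_ifs <;> norm_num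
  have hεξ : ε*ξ = |ξ| := by
    rw [hε]; split_ifs with h
    · rw [_root_.abs_of_pos h]; ring
    · rw [_root_.abs_of_neg (lt_of_le_of_ne (le_of_not_gt h) hξ)]; ring
  obtain ⟨c0, hc0⟩ : ∃ c : ℝ, c = ε*s := ⟨_, rfl⟩
  have hc02 : c0^2 = 1 := by rw [hc0]; linear_combination s^2*hε2 + hs2
  have hcs : c0*s = ε := by rw [hc0]; linear_combination ε*hs2
  -- the chosen eigenvalue
  obtain ⟨lr, hlr⟩ : ∃ t : ℝ, t = (vt'*cθ + c₂*(vt/ρ)*cθ + c0*x)/2 := ⟨_, rfl⟩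
  obtain ⟨li, hli⟩ : ∃ t : ℝ, t = (-(γ*ξ) + c0*s*y)/2 := ⟨_, rfl⟩
  obtain ⟨lam, hlam⟩ : ∃ z : ℂ, z = (lr:ℂ) + (li:ℂ)*Complex.I := ⟨_, rfl⟩
  obtain ⟨u, hu⟩ : ∃ z : ℂ, z = ((c0*x : ℝ):ℂ) + ((c0*s*y : ℝ):ℂ)*Complex.I := ⟨_, rfl⟩
  obtain ⟨S, hS⟩ : ∃ z : ℂ, z = (vt':ℂ)*(cθ:ℂ)
      + (-Complex.I*(γ:ℂ)*(ξ:ℂ) + (c₂:ℂ)*((vt:ℂ)/(ρ:ℂ))*(cθ:ℂ)) := ⟨_, rfl⟩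
  obtain ⟨P, hP⟩ : ∃ z : ℂ, z = (vt':ℂ)*(cθ:ℂ)
        * (-Complex.I*(γ:ℂ)*(ξ:ℂ) + (c₂:ℂ)*((vt:ℂ)/(ρ:ℂ))*(cθ:ℂ))
      - (-(vt:ℂ)*(sθ:ℂ)) * (-(d:ℂ)*((vt':ℂ)/(ρ:ℂ))*(sθ:ℂ)) := ⟨_, rfl⟩
  have h1 : (c0*x)^2 - (c0*s*y)^2 = a := by
    have e1 : (c0*x)^2 - (c0*s*y)^2 = c0^2*x^2 - c0^2*s^2*y^2 := by ring
    rw [e1, hc02, hs2, hx2, hy2, ha]; linarith only []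
  have h2 : 2*(c0*x)*(c0*s*y) = b := by
    have e1 : 2*(c0*x)*(c0*s*y) = c0^2*(s*(2*(x*y))) := by ring
    rw [e1, hc02, h2xy, hsb]; ring
  have hu2 : u^2 = ((a:ℝ):ℂ) + ((b:ℝ):ℂ)*Complex.I := by
    rw [hu, sq_mk, h1, h2]
  have hab : ((a:ℝ):ℂ) + ((b:ℝ):ℂ)*Complex.I = S^2 - 4*P := by
    rw [ha, hb, hp, hq, hS, hP]
    push_cast
    linear_combination (-(γ:ℂ)^2*(ξ:ℂ)^2) * Complex.I_sq
  have hu3 : u^2 = S^2 - 4*P := hu2.trans hab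
  have hld : lam = (S + u)/2 := by
    rw [hlam, hlr, hli, hu, hS]; push_cast; ring
  have hch : lam^2 - S*lam + P = 0 := by
    rw [hld]; linear_combination (1/4 : ℂ) * hu3
  rw [hS, hP] at hch
  refine ⟨lam, ?_, ?_⟩
  · rw [Matrix.det_fin_two]
    simp only [Matrix.sub_apply, Matrix.smul_apply, Matrix.one_apply, smul_eq_mul,
      Matrix.cons_val', Matrix.cons_val_zero, Matrix.cons_val_one, Matrix.head_cons,
      Matrix.head_fin_const, Matrix.empty_val', Matrix.cons_val_fin_one]
    norm_num
    linear_combination hch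
  · have him : lam.im = li := by simp [hlam]
    rw [him, hli]
    have hyγ : γ * |ξ| < y := by
      refine aux_lt _ _ hy0 ?_
      have e : (γ * |ξ|)^2 = γ^2*ξ^2 := by rw [mul_pow, _root_.sq_abs]
      rw [e]; exact hylarge
    have h6 : 0 < |ξ| := _root_.abs_pos.mpr hξ
    have e2 : |ξ| * (γ * |ξ|) = γ*ξ^2 := by rw [← _root_.sq_abs ξ]; ring
    have h5 : γ*ξ^2 < |ξ| * y := by
      have h7 := mul_lt_mul_of_pos_left hyγ h6
      linarith only [h7, e2]
    have h8 : ξ*((-(γ*ξ) + c0*s*y)/2) = (-(γ*ξ^2) + |ξ| * y)/2 := by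
      have h7 : ξ*(c0*s*y) = |ξ| * y := by rw [hcs, ← hεξ]; ring
      linear_combination (1/2 : ℝ) * h7
    rw [h8]; linarith only [h5]
end

section
/- Let ρ > 0, ṽ > 0, γ > 0, d > 0, c₂ > 0, θ ∈ ℝ, ṽ' < 0 and sin θ ≠ 0. For each ξ > 0, let λ(ξ) be the eigenvalue of A_ξ = [[ṽ'·cos θ, −ṽ·sin θ], [−d·(ṽ'/ρ)·sin θ, −iγξ + c₂·(ṽ/ρ)·cos θ]] with Im λ(ξ) > 0 (the unstable mode). Then ξ·Im λ(ξ) converges, as ξ → ∞, to −d·ṽ·ṽ'·sin²θ / (γ·ρ), a strictly positive number. -/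
/-!
Write the eigenvalue as `z = u + i v` and `K = γ ξ`. The characteristic equation
`(a - z)(m - iK - z) = b`, with `b = d ṽ ṽ' sin² θ / ρ < 0` the product of the off-diagonal
entries, splits into `(a - u)(m - u) - v (K + v) = b` and `(u - a)(u - m)(K + v) = -v (u - m)²`.
For `v > 0` the second equation forces `(u - a)(u - m) ≤ 0`, and then the first squeezes
`K v + b` between `-(b² - b (a - m)²) / K²` and `0`, so `ξ · Im λ(ξ) = K v / γ → -b / γ`.
-/

open Matrix Complex Filter Topology

theorem mul_im_add_mem_Icc_of_mul_eq {a m b K : ℝ} {z : ℂ} (hK : 0 < K) (hz : 0 < z.im)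
    (h : (a - z) * (m - K * I - z) = b) :
    K * z.im + b ∈ Set.Icc (-(b ^ 2 - b * (a - m) ^ 2) / K ^ 2) 0 := by
  have hre := congrArg re h
  have him := congrArg im h
  simp only [mul_re, mul_im, sub_re, sub_im, ofReal_re, ofReal_im, I_re, I_im] at hre him
  set u := z.re
  set v := z.im
  have hprod : (u - a) * (u - m) * (K + v) = -v * (u - m) ^ 2 := by
    linear_combination (u - m) * him
  have hprod_nonpos : (u - a) * (u - m) ≤ 0 :=
    nonpos_of_mul_nonpos_left (by rw [hprod]; nlinarith [sq_nonneg (u - m)]) (by linarith)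
  have hupper : K * v + b ≤ 0 := by nlinarith
  have hvK : v ^ 2 * K ^ 2 ≤ b ^ 2 := by nlinarith [mul_pos hz hK]
  have hdist : (u - m) ^ 2 ≤ (a - m) ^ 2 := by nlinarith
  have hprod_bound : -((u - a) * (u - m)) * K ≤ v * (a - m) ^ 2 := by
    nlinarith [mul_le_mul_of_nonneg_left hdist hz.le]
  refine ⟨?_, hupper⟩
  rw [div_le_iff₀ (by positivity)]
  nlinarith [mul_le_mul_of_nonneg_left hprod_bound hK.le, sq_nonneg (a - m)]

theorem tendsto_mul_im_of_mul_eq {a m b γ : ℝ} (hγ : 0 < γ) {z : ℝ → ℂ}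
    (hz : ∀ᶠ ξ in atTop, 0 < (z ξ).im ∧ (a - z ξ) * (m - ↑(γ * ξ) * I - z ξ) = b) :
    Tendsto (fun ξ => ξ * (z ξ).im) atTop (𝓝 (-b / γ)) := by
  have hK : Tendsto (fun ξ : ℝ => γ * ξ) atTop atTop := tendsto_id.const_mul_atTop hγ
  have hbounds : ∀ᶠ ξ in atTop, γ * ξ * (z ξ).im + b ∈
      Set.Icc (-(b ^ 2 - b * (a - m) ^ 2) / (γ * ξ) ^ 2) 0 := by
    filter_upwards [hz, hK.eventually_gt_atTop 0] with ξ ⟨him, hdet⟩ hξ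
    exact mul_im_add_mem_Icc_of_mul_eq hξ him hdet
  have hlower : Tendsto (fun ξ : ℝ => -(b ^ 2 - b * (a - m) ^ 2) / (γ * ξ) ^ 2) atTop (𝓝 0) :=
    tendsto_const_nhds.div_atTop ((tendsto_pow_atTop two_ne_zero).comp hK)
  have hsum : Tendsto (fun ξ => γ * ξ * (z ξ).im + b) atTop (𝓝 0) :=
    tendsto_of_tendsto_of_tendsto_of_le_of_le' hlower tendsto_const_nhds
      (hbounds.mono fun _ h => h.1) (hbounds.mono fun _ h => h.2)
  have hlim := (hsum.sub_const b).div_const γ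
  rw [zero_sub] at hlim
  refine hlim.congr fun ξ => ?_
  field_simp
  ring

theorem stmt_7_general (ρ vt vt' γ d c₂ θ : ℝ) (hρ : 0 < ρ) (hv : 0 < vt)
    (hγ : 0 < γ) (hd : 0 < d) (hvt' : vt' < 0)
    (hθ : Real.sin θ ≠ 0) (lam : ℝ → ℂ)
    (hlam : ∀ ξ : ℝ, 0 < ξ →
      ((!![(vt' * Real.cos θ : ℂ), (-vt * Real.sin θ : ℂ);
           (-d * (vt' / ρ) * Real.sin θ : ℂ),
           -Complex.I * γ * ξ + (c₂ * (vt / ρ) * Real.cos θ : ℂ)] :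
          Matrix (Fin 2) (Fin 2) ℂ)
        - lam ξ • (1 : Matrix (Fin 2) (Fin 2) ℂ)).det = 0)
    (him : ∀ ξ : ℝ, 0 < ξ → 0 < (lam ξ).im) :
    Tendsto (fun ξ : ℝ => ξ * (lam ξ).im) atTop
      (nhds (-(d * vt * vt' * Real.sin θ ^ 2) / (γ * ρ))) ∧
    0 < -(d * vt * vt' * Real.sin θ ^ 2) / (γ * ρ) := by
  constructor
  · have hlim := tendsto_mul_im_of_mul_eq (a := vt' * Real.cos θ)
      (m := c₂ * (vt / ρ) * Real.cos θ) (b := d * vt * (vt' / ρ) * Real.sin θ ^ 2) hγ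
      (z := lam) <| by
        filter_upwards [eventually_gt_atTop 0] with ξ hξ
        refine ⟨him ξ hξ, ?_⟩
        have hdet := hlam ξ hξ
        simp [det_fin_two] at hdet
        push_cast
        linear_combination hdet
    convert hlim using 2
    field_simp
  · have hnum : 0 < d * vt * -vt' * Real.sin θ ^ 2 := by
      have := neg_pos.2 hvt'
      positivity
    exact div_pos (by linarith) (by positivity)

theorem stmt_7 (ρ vt vt' γ d c₂ θ : ℝ) (hρ : 0 < ρ) (hv : 0 < vt)
    (hγ : 0 < γ) (hd : 0 < d) (hc₂ : 0 < c₂) (hvt' : vt' < 0)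
    (hθ : Real.sin θ ≠ 0) (lam : ℝ → ℂ)
    (hlam : ∀ ξ : ℝ, 0 < ξ →
      ((!![(vt' * Real.cos θ : ℂ), (-vt * Real.sin θ : ℂ);
           (-d * (vt' / ρ) * Real.sin θ : ℂ),
           -Complex.I * γ * ξ + (c₂ * (vt / ρ) * Real.cos θ : ℂ)] :
          Matrix (Fin 2) (Fin 2) ℂ)
        - lam ξ • (1 : Matrix (Fin 2) (Fin 2) ℂ)).det = 0)
    (him : ∀ ξ : ℝ, 0 < ξ → 0 < (lam ξ).im) :
    Tendsto (fun ξ : ℝ => ξ * (lam ξ).im) atTop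
      (nhds (-(d * vt * vt' * Real.sin θ ^ 2) / (γ * ρ))) ∧
    0 < -(d * vt * vt' * Real.sin θ ^ 2) / (γ * ρ) :=
  stmt_7_general ρ vt vt' γ d c₂ θ hρ hv hγ hd hvt' hθ lam hlam him
end

section
/- Let a ∈ ℝ, e ∈ ℝ. As b → +∞, the complex number Δ(b) = (a + ib)² + e has a square root α(b) + iβ(b) with β(b) > 0 satisfying β(b) = b − e/(2b) + O(1/b²). In particular, β(b) − b = −e/(2b) + O(1/b²) and b·(β(b) − b) → −e/2. -/
/-!
Write `Δ = w ^ 2 + e` with `w = a + b i`. Its square root in the upper half-plane has imaginary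
part `β` with `β ^ 2 = (‖Δ‖ - Re Δ) / 2`. The identity `‖w ^ 2 + e‖ ^ 2 - (‖w‖ ^ 2 - e) ^ 2 = 4 e a ^ 2`
gives `‖Δ‖ = a ^ 2 + b ^ 2 - e + O(1 / b ^ 2)`, hence `β ^ 2 = (b - e / (2 b)) ^ 2 + O(1 / b ^ 2)`,
and dividing by `β + b - e / (2 b) ≥ b / 2` yields `β = b - e / (2 b) + O(1 / b ^ 3)`.
-/

open Complex Filter Asymptotics

namespace Complex

noncomputable def upperSqrtIm (z : ℂ) : ℝ := √((‖z‖ - z.re) / 2)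

-- On the ray `[0, ∞)` the imaginary part vanishes and the division below returns the junk value 0.
noncomputable def upperSqrtRe (z : ℂ) : ℝ := z.im / (2 * upperSqrtIm z)

theorem upperSqrtIm_sq (z : ℂ) : upperSqrtIm z ^ 2 = (‖z‖ - z.re) / 2 :=
  Real.sq_sqrt (by linarith [re_le_norm z])

theorem upperSqrtIm_pos {z : ℂ} (hz : z.re < ‖z‖) : 0 < upperSqrtIm z :=
  Real.sqrt_pos.2 (by linarith)

theorem upperSqrt_sq {z : ℂ} (hz : z.re < ‖z‖) :
    ((upperSqrtRe z : ℂ) + upperSqrtIm z * I) ^ 2 = z := by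
  have hα : upperSqrtRe z = z.im / (2 * upperSqrtIm z) := rfl
  set β := upperSqrtIm z
  have hβ : β ≠ 0 := (upperSqrtIm_pos hz).ne'
  have hre : upperSqrtRe z ^ 2 - β ^ 2 = z.re := by
    have hnorm := sq_norm_sub_sq_re z
    have hβsq : 2 * β ^ 2 = ‖z‖ - z.re := by rw [upperSqrtIm_sq]; ring
    rw [hα, div_pow, ← hnorm]
    field_simp
    linear_combination (-(2 * β ^ 2 + ‖z‖ + z.re)) * hβsq
  have him : 2 * (upperSqrtRe z * β) = z.im := by
    rw [hα]; field_simp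
  apply Complex.ext <;> simp [sq]
  · linear_combination hre
  · linear_combination him

theorem sq_norm_sq_add_ofReal_sub (w : ℂ) (e : ℝ) :
    ‖w ^ 2 + e‖ ^ 2 - (‖w‖ ^ 2 - e) ^ 2 = 4 * e * w.re ^ 2 := by
  rw [Complex.sq_norm, Complex.sq_norm]
  simp only [normSq_apply, sq, add_re, add_im, mul_re, mul_im, ofReal_re, ofReal_im]
  ring

end Complex

theorem Asymptotics.isBigO_sub_of_sq_sub {α : Type*} {l : Filter α} {f g u v : α → ℝ}
    (hf : ∀ᶠ x in l, 0 ≤ f x) (hg : ∀ᶠ x in l, 0 < g x)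
    (hsq : (fun x => f x ^ 2 - g x ^ 2) =O[l] u) (hinv : (fun x => (g x)⁻¹) =O[l] v) :
    (fun x => f x - g x) =O[l] (u * v) := by
  have hsum : (fun x => (f x + g x)⁻¹) =O[l] fun x => (g x)⁻¹ := by
    refine IsBigO.of_bound 1 ?_
    filter_upwards [hf, hg] with x hfx hgx
    rw [one_mul, Real.norm_of_nonneg (by positivity), Real.norm_of_nonneg (by positivity)]
    exact inv_anti₀ hgx (by linarith)
  refine (hsq.mul (hsum.trans hinv)).congr' ?_ EventuallyEq.rfl
  filter_upwards [hf, hg] with x hfx hgx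
  field_simp
  ring

section Discriminant

variable (a e : ℝ)

theorem norm_discr_sub_isBigO :
    (fun b : ℝ => ‖((a : ℂ) + b * I) ^ 2 + e‖ - (a ^ 2 + b ^ 2 - e)) =O[atTop]
      fun b => 1 / b ^ 2 := by
  refine IsBigO.of_bound (8 * |e| * a ^ 2) ?_
  filter_upwards [eventually_ge_atTop (max 1 (2 * |e|))] with b hb
  set N := ‖((a : ℂ) + b * I) ^ 2 + e‖
  have hkey : (N - (a ^ 2 + b ^ 2 - e)) * (N + (a ^ 2 + b ^ 2 - e)) = 4 * e * a ^ 2 := by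
    have := sq_norm_sq_add_ofReal_sub ((a : ℂ) + b * I) e
    rw [Complex.sq_norm (a + b * I), normSq_add_mul_I] at this
    simp only [add_re, ofReal_re, mul_re, I_re, ofReal_im, I_im] at this
    linear_combination this
  have hb1 : 1 ≤ b := le_of_max_le_left hb
  have hbe : 2 * |e| ≤ b ^ 2 := by nlinarith [le_of_max_le_right hb]
  have hsum : b ^ 2 / 2 ≤ N + (a ^ 2 + b ^ 2 - e) := by
    nlinarith [norm_nonneg (((a : ℂ) + b * I) ^ 2 + e), le_abs_self e, sq_nonneg a]
  rw [Real.norm_eq_abs, norm_div, norm_one, norm_pow, Real.norm_eq_abs, sq_abs,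
    ← mul_div_assoc, mul_one, le_div_iff₀ (by positivity)]
  have hpos : 0 < N + (a ^ 2 + b ^ 2 - e) := by nlinarith
  have habs : |N - (a ^ 2 + b ^ 2 - e)| * (N + (a ^ 2 + b ^ 2 - e)) = 4 * |e| * a ^ 2 := by
    rw [← abs_of_pos hpos, ← abs_mul, hkey, abs_mul, abs_mul, abs_of_pos four_pos, abs_sq]
  nlinarith [abs_nonneg (N - (a ^ 2 + b ^ 2 - e))]

theorem re_discr (b : ℝ) : (((a : ℂ) + b * I) ^ 2 + e).re = a ^ 2 - b ^ 2 + e := by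
  simp [sq]

theorem upperSqrtIm_discr_sq_sub_isBigO :
    (fun b : ℝ => upperSqrtIm (((a : ℂ) + b * I) ^ 2 + e) ^ 2 - (b - e / (2 * b)) ^ 2)
      =O[atTop] fun b => 1 / b ^ 2 := by
  have h := ((norm_discr_sub_isBigO a e).const_mul_left (1 / 2)).sub
    ((isBigO_refl (fun b : ℝ => 1 / b ^ 2) atTop).const_mul_left (e ^ 2 / 4))
  refine h.congr' ?_ EventuallyEq.rfl
  filter_upwards [eventually_ne_atTop 0] with b hb
  rw [upperSqrtIm_sq, re_discr]
  field_simp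
  ring

theorem eventually_half_le_sub_div : ∀ᶠ b : ℝ in atTop, b / 2 ≤ b - e / (2 * b) := by
  filter_upwards [eventually_ge_atTop (max 1 |e|)] with b hb
  have hb1 : 1 ≤ b := le_of_max_le_left hb
  have hdiv : e / (2 * b) ≤ 1 / 2 := by
    rw [div_le_iff₀ (by positivity)]
    linarith [le_abs_self e, le_of_max_le_right hb]
  linarith

theorem upperSqrtIm_discr_sub_isBigO :
    (fun b : ℝ => upperSqrtIm (((a : ℂ) + b * I) ^ 2 + e) - (b - e / (2 * b)))
      =O[atTop] fun b => 1 / b ^ 2 * b⁻¹ := by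
  have hpos : ∀ᶠ b : ℝ in atTop, 0 < b - e / (2 * b) := by
    filter_upwards [eventually_half_le_sub_div e, eventually_gt_atTop 0] with b hb hb0
    linarith
  have hinv : (fun b : ℝ => (b - e / (2 * b))⁻¹) =O[atTop] fun b => b⁻¹ := by
    refine IsBigO.of_bound 2 ?_
    filter_upwards [eventually_half_le_sub_div e, eventually_gt_atTop 0] with b hb hb0
    rw [norm_inv, norm_inv, Real.norm_of_nonneg (by linarith), Real.norm_of_nonneg hb0.le]
    calc (b - e / (2 * b))⁻¹ ≤ (b / 2)⁻¹ := inv_anti₀ (by positivity) hb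
      _ = 2 * b⁻¹ := by ring
  exact isBigO_sub_of_sq_sub (Eventually.of_forall fun b => Real.sqrt_nonneg _)
    hpos (upperSqrtIm_discr_sq_sub_isBigO a e) hinv

end Discriminant

theorem stmt_9 (a e : ℝ) :
    ∃ α β : ℝ → ℝ,
      (∀ᶠ b in atTop, ((α b : ℂ) + β b * Complex.I) ^ 2
          = ((a : ℂ) + b * Complex.I) ^ 2 + e ∧ 0 < β b) ∧
      (fun b : ℝ => β b - (b - e / (2 * b))) =O[atTop] (fun b : ℝ => 1 / b ^ 2) ∧
      Tendsto (fun b : ℝ => b * (β b - b)) atTop (nhds (-e / 2)) := by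
  set Δ : ℝ → ℂ := fun b => ((a : ℂ) + b * I) ^ 2 + e
  have hre : ∀ᶠ b : ℝ in atTop, (Δ b).re < ‖Δ b‖ := by
    filter_upwards [(tendsto_pow_atTop two_ne_zero).eventually_gt_atTop (a ^ 2 + e)] with b hb
    linarith [re_discr a e b, norm_nonneg (Δ b)]
  have hO : (fun b => upperSqrtIm (Δ b) - (b - e / (2 * b))) =O[atTop] fun b => 1 / b ^ 2 := by
    simpa using (upperSqrtIm_discr_sub_isBigO a e).trans
      ((isBigO_refl (fun b : ℝ => 1 / b ^ 2) atTop).mul (tendsto_inv_atTop_zero.isBigO_one ℝ))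
  refine ⟨fun b => upperSqrtRe (Δ b), fun b => upperSqrtIm (Δ b), ?_, hO, ?_⟩
  · filter_upwards [hre] with b hb
    exact ⟨upperSqrt_sq hb, upperSqrtIm_pos hb⟩
  · have hlim :
        Tendsto (fun b : ℝ => b * (upperSqrtIm (Δ b) - (b - e / (2 * b)))) atTop (nhds 0) := by
      refine ((isBigO_refl (fun b : ℝ => b) atTop).mul hO).trans_tendsto ?_
      refine tendsto_inv_atTop_zero.congr' ?_
      filter_upwards [eventually_ne_atTop 0] with b hb
      field_simp
    have h := hlim.sub_const (e / 2)
    rw [zero_sub, ← neg_div] at h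
    refine h.congr' ?_
    filter_upwards [eventually_ne_atTop 0] with b hb
    field_simp
    ring
end
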